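/- Let Γ₁ and Γ₂ be graded graphs with a graded graph isomorphism λ ↦ λ′ from Γ₁ to Γ₂, and let Γ be the graded graph with Γ₀ = (Γ₁)₀ and Γ_n = (Γ₁)_n ⊔ (Γ₂)_{n−1} for n ≥ 1, whose edges are: the edges of Γ₁; the edges of Γ₂ (with levels shifted up by one); and, for every λ ∈ Γ₁, an edge from λ to λ′. If φ is a harmonic function on Γ and λ ∈ Γ₁ satisfies φ(λ′) > 0, then φ(λ) = +∞. -/

import Mathlib

/-!
Write `u λ = φ(λ)` and `v λ = φ(λ′)` for `λ ∈ Γ₁`. Harmonicity of `φ` at `λ′` and the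
isomorphism make `v` harmonic on `Γ₁`, while harmonicity at `λ` gives
`u λ = ∑_{λ ↗ μ} u μ + v λ`. Induction on `n` then yields `n · v ≤ u` for every `n`,
so `u λ = ∞` as soon as `v λ > 0`.
-/

open scoped ENNReal NNReal

namespace Zigzag

/-- A graded graph: vertices partitioned into finite levels, oriented edges going up
one level, every vertex having at least one outgoing edge. -/
structure GradedGraph where
  V : Type
  rank : V → ℕ
  adj : V → V → Prop
  rank_adj : ∀ ⦃x y⦄, adj x y → rank y = rank x + 1
  finLevels : ∀ n : ℕ, {x : V | rank x = n}.Finite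
  outEdge : ∀ x : V, ∃ y, adj x y

namespace GradedGraph

variable (G : GradedGraph)

/-- `x ≤ y`: `y` is reachable from `x` by a directed path (possibly trivial). -/
def le (x y : G.V) : Prop := Relation.ReflTransGen G.adj x y

/-- The finset of upper neighbours of a vertex. -/
noncomputable def upFinset (x : G.V) : Finset G.V :=
  ((G.finLevels (G.rank x + 1)).subset fun _ hy => G.rank_adj hy).toFinset

/-- A coideal: closed under going down. -/
def IsCoideal (J : Set G.V) : Prop := ∀ a ∈ J, ∀ b, G.le b a → b ∈ J

/-- A saturated coideal: a coideal in which every vertex has an upper neighbour. -/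
def IsSatCoideal (J : Set G.V) : Prop :=
  G.IsCoideal J ∧ ∀ a ∈ J, ∃ b ∈ J, G.adj a b

/-- A primitive saturated coideal: a saturated coideal which is not the union of two
strictly smaller saturated coideals. -/
def IsPrimCoideal (J : Set G.V) : Prop :=
  G.IsSatCoideal J ∧ ∀ J₁ J₂ : Set G.V, G.IsSatCoideal J₁ → G.IsSatCoideal J₂ →
    J = J₁ ∪ J₂ → J = J₁ ∨ J = J₂

/-- An ideal: closed under going up. -/
def IsIdeal (I : Set G.V) : Prop := ∀ a ∈ I, ∀ b, G.le a b → b ∈ I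

/-- A `[0,∞]`-valued function on the vertices is harmonic if its value at any vertex
equals the sum of its values at the upper neighbours. -/
def Harmonic (φ : G.V → ℝ≥0∞) : Prop := ∀ x, φ x = ∑ y ∈ G.upFinset x, φ y

/-- The relation `λ = ∑_{μ : λ ↗ μ} μ` as an element of the free module. -/
noncomputable def relOf (x : G.V) : G.V →₀ ℝ :=
  Finsupp.single x 1 - ∑ y ∈ G.upFinset x, Finsupp.single y 1

/-- The submodule of relations defining `K(Γ)`. -/
noncomputable def Krel : Submodule ℝ (G.V →₀ ℝ) :=
  Submodule.span ℝ (Set.range G.relOf)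

/-- The class of `f` in `K(Γ)`. -/
noncomputable def kmk (f : G.V →₀ ℝ) : (G.V →₀ ℝ) ⧸ G.Krel :=
  Submodule.Quotient.mk f

/-- The cone `K⁺(Γ)` spanned by the vertices in `K(Γ)`. -/
noncomputable def Kpos : Set ((G.V →₀ ℝ) ⧸ G.Krel) :=
  G.kmk '' {f | ∀ x, 0 ≤ f x}

/-- The order defined by the cone: `x ≤_K y` iff `y − x ∈ K⁺(Γ)`. -/
def leK (x y : (G.V →₀ ℝ) ⧸ G.Krel) : Prop := y - x ∈ G.Kpos

/-- The value of (the canonical extension of) `φ` at a nonnegative combination of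
vertices. -/
noncomputable def phiHat (φ : G.V → ℝ≥0∞) (f : G.V →₀ ℝ) : ℝ≥0∞ :=
  ∑ x ∈ f.support, ENNReal.ofReal (f x) * φ x

/-- `φ` is everywhere finite. -/
def FiniteH (φ : G.V → ℝ≥0∞) : Prop := ∀ x, φ x ≠ ⊤

/-- `φ` is semifinite: not everywhere finite, and its value at any element of the cone
`K⁺(Γ)` is the supremum of its values at the `≤_K`-smaller elements of the cone where
it is finite. -/
def Semifinite (φ : G.V → ℝ≥0∞) : Prop :=
  (∃ x, φ x = ⊤) ∧
  ∀ f : G.V →₀ ℝ, (∀ x, 0 ≤ f x) →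
    G.phiHat φ f =
      ⨆ g ∈ {g : G.V →₀ ℝ |
        (∀ x, 0 ≤ g x) ∧ G.leK (G.kmk g) (G.kmk f) ∧ G.phiHat φ g ≠ ⊤},
        G.phiHat φ g

/-- A semifinite harmonic function `φ` is indecomposable if any finite or semifinite
harmonic function `φ′ ≤ φ` which does not vanish identically on the finiteness ideal
of `φ` is a constant multiple of `φ` on that ideal. -/
def IndecSemifinite (φ : G.V → ℝ≥0∞) : Prop :=
  ∀ φ' : G.V → ℝ≥0∞, G.Harmonic φ' →
    (G.FiniteH φ' ∨ G.Semifinite φ') →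
    (∀ x, φ' x ≤ φ x) →
    (∃ x, φ x ≠ ⊤ ∧ φ' x ≠ 0) →
    ∃ c : ℝ≥0, ∀ x, φ x ≠ ⊤ → φ' x = (c : ℝ≥0∞) * φ x

/-- A finite harmonic function `φ` is indecomposable if any harmonic function
`φ′ ≤ φ` which is not identically zero is a constant multiple of `φ`. -/
def IndecFinite (φ : G.V → ℝ≥0∞) : Prop :=
  ∀ φ' : G.V → ℝ≥0∞, G.Harmonic φ' →
    (∀ x, φ' x ≤ φ x) → (∃ x, φ' x ≠ 0) →
    ∃ c : ℝ≥0, ∀ x, φ' x = (c : ℝ≥0∞) * φ x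

/-- The number of directed paths from `x` to `y` (the shifted dimension
`dim(x, y)`). -/
noncomputable def gdim (x y : G.V) : ℕ :=
  Nat.card {p : List G.V // p.Chain' G.adj ∧ p.head? = some x ∧ p.getLast? = some y}

end GradedGraph

end Zigzag

namespace Zigzag

open GradedGraph

/-- The adjacency of the glued graph of Boyer's lemma. -/
def boyerAdj (G₁ G₂ : GradedGraph) (f : G₁.V → G₂.V) :
    (G₁.V ⊕ G₂.V) → (G₁.V ⊕ G₂.V) → Prop
  | .inl x, .inl y => G₁.adj x y
  | .inr x, .inr y => G₂.adj x y
  | .inl x, .inr y => y = f x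
  | .inr _, .inl _ => False

/-- The glued graph of Boyer's lemma: `Γ₀ = (Γ₁)₀`, `Γ_n = (Γ₁)_n ⊔ (Γ₂)_{n−1}`, with
the edges of `Γ₁`, the edges of `Γ₂` shifted up by one level, and an edge `λ ↗ λ′`
for every `λ ∈ Γ₁`, where `λ ↦ λ′` is a given isomorphism of graded graphs. -/
noncomputable def boyerGraph (G₁ G₂ : GradedGraph) (f : G₁.V ≃ G₂.V)
    (hf_rank : ∀ x, G₂.rank (f x) = G₁.rank x)
    (hf_adj : ∀ x y, G₁.adj x y ↔ G₂.adj (f x) (f y)) : GradedGraph where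
  V := G₁.V ⊕ G₂.V
  rank := Sum.elim G₁.rank (fun y => G₂.rank y + 1)
  adj := boyerAdj G₁ G₂ f
  rank_adj := by
    rintro (x | x) (y | y) h
    · exact G₁.rank_adj h
    · simp only [boyerAdj] at h
      subst h
      simp only [Sum.elim_inl, Sum.elim_inr, hf_rank]
    · simp only [boyerAdj] at h
    · have := G₂.rank_adj h
      simp only [Sum.elim_inr]
      omega
  finLevels n := by
    have : {a : G₁.V ⊕ G₂.V | Sum.elim G₁.rank (fun y => G₂.rank y + 1) a = n}
        ⊆ (Sum.inl '' {x | G₁.rank x = n}) ∪ (Sum.inr '' {y | G₂.rank y = n - 1}) := by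
      rintro (x | y) h
      · exact Or.inl ⟨x, h, rfl⟩
      · refine Or.inr ⟨y, ?_, rfl⟩
        have h' : G₂.rank y + 1 = n := h
        show G₂.rank y = n - 1
        omega
    exact Set.Finite.subset
      (((G₁.finLevels n).image Sum.inl).union ((G₂.finLevels (n - 1)).image Sum.inr)) this
  outEdge := by
    rintro (x | y)
    · exact ⟨Sum.inr (f x), rfl⟩
    · obtain ⟨z, hz⟩ := G₂.outEdge y
      exact ⟨Sum.inr z, hz⟩

namespace GradedGraph

theorem mem_upFinset {G : GradedGraph} {x y : G.V} : y ∈ G.upFinset x ↔ G.adj x y :=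
  Set.Finite.mem_toFinset _

theorem upFinset_equiv {G₁ G₂ : GradedGraph} (f : G₁.V ≃ G₂.V)
    (hf_adj : ∀ x y, G₁.adj x y ↔ G₂.adj (f x) (f y)) (x : G₁.V) :
    G₂.upFinset (f x) = (G₁.upFinset x).map f.toEmbedding := by
  ext z
  obtain ⟨y, rfl⟩ := f.surjective z
  simp [mem_upFinset, hf_adj]

theorem Harmonic.comp_equiv {G₁ G₂ : GradedGraph} {ψ : G₂.V → ℝ≥0∞} (hψ : G₂.Harmonic ψ)
    (f : G₁.V ≃ G₂.V) (hf_adj : ∀ x y, G₁.adj x y ↔ G₂.adj (f x) (f y)) :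
    G₁.Harmonic (ψ ∘ f) := fun x => by
  rw [Function.comp_apply, hψ, upFinset_equiv f hf_adj, Finset.sum_map]
  rfl

theorem natCast_mul_le_of_eq_sum_add {G : GradedGraph} {u v : G.V → ℝ≥0∞}
    (hv : G.Harmonic v) (hu : ∀ x, u x = ∑ y ∈ G.upFinset x, u y + v x) (n : ℕ) (x : G.V) :
    n * v x ≤ u x := by
  induction n generalizing x with
  | zero => simp
  | succ n ih =>
    calc ((n + 1 : ℕ) : ℝ≥0∞) * v x = ∑ y ∈ G.upFinset x, n * v y + v x := by
          rw [← Finset.mul_sum, ← hv x]; push_cast; ring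
      _ ≤ ∑ y ∈ G.upFinset x, u y + v x := by gcongr with y; exact ih y
      _ = u x := (hu x).symm

theorem eq_top_of_eq_sum_add {G : GradedGraph} {u v : G.V → ℝ≥0∞}
    (hv : G.Harmonic v) (hu : ∀ x, u x = ∑ y ∈ G.upFinset x, u y + v x) {x : G.V}
    (hx : v x ≠ 0) : u x = ⊤ := by
  by_contra hfin
  obtain ⟨n, hn⟩ := ENNReal.exists_nat_mul_gt hx hfin
  exact (natCast_mul_le_of_eq_sum_add hv hu n x).not_gt hn

section boyerGraph

variable {G₁ G₂ : GradedGraph} {f : G₁.V ≃ G₂.V} {hf_rank : ∀ x, G₂.rank (f x) = G₁.rank x}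
  {hf_adj : ∀ x y, G₁.adj x y ↔ G₂.adj (f x) (f y)}

theorem upFinset_boyerGraph_inl (x : G₁.V) :
    (boyerGraph G₁ G₂ f hf_rank hf_adj).upFinset (.inl x) = (G₁.upFinset x).disjSum {f x} := by
  refine Finset.ext (α := G₁.V ⊕ G₂.V) fun y => mem_upFinset.trans ?_
  rcases y with y | y <;> simp [boyerGraph, boyerAdj, mem_upFinset]

theorem upFinset_boyerGraph_inr (x : G₂.V) :
    (boyerGraph G₁ G₂ f hf_rank hf_adj).upFinset (.inr x) =
      (∅ : Finset G₁.V).disjSum (G₂.upFinset x) := by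
  refine Finset.ext (α := G₁.V ⊕ G₂.V) fun y => mem_upFinset.trans ?_
  rcases y with y | y <;> simp [boyerGraph, boyerAdj, mem_upFinset]

theorem Harmonic.boyerGraph_inl {φ : G₁.V ⊕ G₂.V → ℝ≥0∞}
    (hφ : (boyerGraph G₁ G₂ f hf_rank hf_adj).Harmonic φ) (x : G₁.V) :
    φ (.inl x) = ∑ y ∈ G₁.upFinset x, φ (.inl y) + φ (.inr (f x)) := by
  have h := hφ (.inl x)
  rw [upFinset_boyerGraph_inl] at h
  exact h.trans ((Finset.sum_disjSum _ _ φ).trans (by rw [Finset.sum_singleton]))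

theorem Harmonic.comp_inr {φ : G₁.V ⊕ G₂.V → ℝ≥0∞}
    (hφ : (boyerGraph G₁ G₂ f hf_rank hf_adj).Harmonic φ) : G₂.Harmonic (φ ∘ .inr) := fun x => by
  have h := hφ (.inr x)
  rw [upFinset_boyerGraph_inr] at h
  exact h.trans ((Finset.sum_disjSum _ _ φ).trans (by rw [Finset.sum_empty, zero_add]; rfl))

end boyerGraph

end GradedGraph

/-- Boyer's lemma.  If `φ` is a harmonic function on the glued
graph and `λ ∈ Γ₁` satisfies `φ(λ′) > 0`, then `φ(λ) = +∞`. -/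
theorem boyer_lemma (G₁ G₂ : GradedGraph) (f : G₁.V ≃ G₂.V)
    (hf_rank : ∀ x, G₂.rank (f x) = G₁.rank x)
    (hf_adj : ∀ x y, G₁.adj x y ↔ G₂.adj (f x) (f y))
    (φ : (G₁.V ⊕ G₂.V) → ℝ≥0∞)
    (hφ : (boyerGraph G₁ G₂ f hf_rank hf_adj).Harmonic φ)
    (lam : G₁.V) (hpos : φ (Sum.inr (f lam)) ≠ 0) :
    φ (Sum.inl lam) = ⊤ := by
  have hv : G₁.Harmonic (φ ∘ .inr ∘ f) := hφ.comp_inr.comp_equiv f hf_adj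
  exact eq_top_of_eq_sum_add hv hφ.boyerGraph_inl hpos

end Zigzag
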